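/- Let θ be an n×n real skew-symmetric matrix and g = [[A,B],[C,D]] ∈ O(n,n|ℝ) with Cθ+D invertible. Then g⁻¹ = [[Dᵗ, Bᵗ],[Cᵗ, Aᵗ]] satisfies: Cᵗ(gθ) + Aᵗ is invertible and g⁻¹(gθ) = θ, where gθ = (Aθ+B)(Cθ+D)⁻¹. -/

import Mathlib

/-!
The inverse of `g ∈ O(n,n)` is `J gᵀ J = [[Dᵀ,Bᵀ],[Cᵀ,Aᵀ]]`, where `J = [[0,1],[1,0]]`.
The fractional-linear action comes from the linear action on block columns:
`g [θ; 1] = [Aθ+B; Cθ+D] = [gθ; 1] (Cθ+D)`. Applying any left inverse `h` of `g` gives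
`h [gθ; 1] (Cθ+D) = [θ; 1]`, whose lower block says that the denominator of `h(gθ)` has
right inverse `Cθ+D`, and whose upper block then gives `h(gθ) = θ`.
-/

open Matrix

namespace Matrix

variable {n R : Type*} [Fintype n] [DecidableEq n] [CommRing R]

noncomputable def linFrac (A B C D θ : Matrix n n R) : Matrix n n R :=
  (A * θ + B) * (C * θ + D)⁻¹

theorem fromBlocks_zero_one_one_zero_mul_self :
    (fromBlocks 0 1 1 0 * fromBlocks 0 1 1 0 : Matrix (n ⊕ n) (n ⊕ n) R) = 1 := by
  simp [fromBlocks_multiply, fromBlocks_one]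

theorem fromBlocks_transpose_swap_mul_self_eq_one {A B C D : Matrix n n R}
    (hg : (fromBlocks A B C D)ᵀ * fromBlocks 0 1 1 0 * fromBlocks A B C D
      = fromBlocks 0 1 1 0) :
    fromBlocks Dᵀ Bᵀ Cᵀ Aᵀ * fromBlocks A B C D = 1 := by
  set J : Matrix (n ⊕ n) (n ⊕ n) R := fromBlocks 0 1 1 0
  have hconj : fromBlocks Dᵀ Bᵀ Cᵀ Aᵀ = J * (fromBlocks A B C D)ᵀ * J := by
    simp [J, fromBlocks_transpose, fromBlocks_multiply]
  calc fromBlocks Dᵀ Bᵀ Cᵀ Aᵀ * fromBlocks A B C D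
      = J * ((fromBlocks A B C D)ᵀ * J * fromBlocks A B C D) := by
        rw [hconj]; simp only [Matrix.mul_assoc]
    _ = 1 := by rw [hg, fromBlocks_zero_one_one_zero_mul_self]

theorem fromBlocks_mul_fromRows_one_eq {A B C D θ : Matrix n n R} (hθ : IsUnit (C * θ + D)) :
    fromBlocks A B C D * fromRows θ (1 : Matrix n n R) =
      fromRows (linFrac A B C D θ) 1 * (C * θ + D) := by
  have hdet : IsUnit (C * θ + D).det := (isUnit_iff_isUnit_det _).mp hθ
  rw [fromBlocks_mul_fromRows, fromRows_mul, linFrac, nonsing_inv_mul_cancel_right _ _ hdet,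
    Matrix.one_mul]
  simp only [Matrix.mul_one]

theorem isUnit_and_linFrac_linFrac_of_mul_eq_one {A B C D A' B' C' D' θ : Matrix n n R}
    (hinv : fromBlocks A' B' C' D' * fromBlocks A B C D = 1) (hθ : IsUnit (C * θ + D)) :
    IsUnit (C' * linFrac A B C D θ + D') ∧ linFrac A' B' C' D' (linFrac A B C D θ) = θ := by
  set X := linFrac A B C D θ
  have hcol :
      fromRows (A' * X + B') (C' * X + D') * (C * θ + D) = fromRows θ (1 : Matrix n n R) := by
    calc fromRows (A' * X + B') (C' * X + D') * (C * θ + D)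
        = fromBlocks A' B' C' D' * fromRows X (1 : Matrix n n R) * (C * θ + D) := by
          simp only [fromBlocks_mul_fromRows, Matrix.mul_one]
      _ = fromBlocks A' B' C' D' * (fromBlocks A B C D * fromRows θ (1 : Matrix n n R)) := by
          rw [Matrix.mul_assoc, fromBlocks_mul_fromRows_one_eq hθ]
      _ = fromRows θ (1 : Matrix n n R) := by
          rw [(Matrix.mul_assoc _ _ _).symm, hinv, Matrix.one_mul]
  rw [fromRows_mul, fromRows_inj.eq_iff] at hcol
  obtain ⟨hnum, hden⟩ := hcol
  refine ⟨(isUnit_iff_isUnit_det _).mpr (isUnit_det_of_right_inverse hden), ?_⟩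
  rw [linFrac, inv_eq_right_inv hden, hnum]

end Matrix

theorem stmt19_general (n : ℕ) (A B C D θ : Matrix (Fin n) (Fin n) ℝ)
    (hg : (Matrix.fromBlocks A B C D)ᵀ * Matrix.fromBlocks 0 1 1 0 * Matrix.fromBlocks A B C D
      = Matrix.fromBlocks 0 1 1 0)
    (hinv : IsUnit (C * θ + D)) :
    (Matrix.fromBlocks A B C D)⁻¹ = Matrix.fromBlocks Dᵀ Bᵀ Cᵀ Aᵀ ∧
    IsUnit (Cᵀ * ((A * θ + B) * (C * θ + D)⁻¹) + Aᵀ) ∧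
    (Dᵀ * ((A * θ + B) * (C * θ + D)⁻¹) + Bᵀ) *
        (Cᵀ * ((A * θ + B) * (C * θ + D)⁻¹) + Aᵀ)⁻¹ = θ := by
  have hleft := fromBlocks_transpose_swap_mul_self_eq_one hg
  exact ⟨inv_eq_left_inv hleft, isUnit_and_linFrac_linFrac_of_mul_eq_one hleft hinv⟩

theorem stmt19 (n : ℕ) (A B C D θ : Matrix (Fin n) (Fin n) ℝ)
    (hg : (Matrix.fromBlocks A B C D)ᵀ * Matrix.fromBlocks 0 1 1 0 * Matrix.fromBlocks A B C D
      = Matrix.fromBlocks 0 1 1 0)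
    (hθ : θᵀ = -θ) (hinv : IsUnit (C * θ + D)) :
    (Matrix.fromBlocks A B C D)⁻¹ = Matrix.fromBlocks Dᵀ Bᵀ Cᵀ Aᵀ ∧
    IsUnit (Cᵀ * ((A * θ + B) * (C * θ + D)⁻¹) + Aᵀ) ∧
    (Dᵀ * ((A * θ + B) * (C * θ + D)⁻¹) + Bᵀ) *
        (Cᵀ * ((A * θ + B) * (C * θ + D)⁻¹) + Aᵀ)⁻¹ = θ :=
  stmt19_general n A B C D θ hg hinv
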